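/- Homomorphisms preserve and reflect saturation: if φ : X₁ → X₂ is a homomorphism of Kripke structures, then a state x ∈ X₁ is m-saturated if and only if φ(x) is m-saturated. -/
import Mathlib


/-- Modal formulas over a set `Φ` of atomic propositions. -/
inductive ModalFormula (Φ : Type*) : Type _ where
  | atom : Φ → ModalFormula Φ
  | top  : ModalFormula Φ
  | bot  : ModalFormula Φ
  | neg  : ModalFormula Φ → ModalFormula Φ
  | and  : ModalFormula Φ → ModalFormula Φ → ModalFormula Φ
  | or   : ModalFormula Φ → ModalFormula Φ → ModalFormula Φ
  | box  : ModalFormula Φ → ModalFormula Φ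

/-- `◇φ := ¬□¬φ`. -/
def ModalFormula.dia {Φ : Type*} (φ : ModalFormula Φ) : ModalFormula Φ :=
  .neg (.box (.neg φ))

/-- A Kripke structure on state set `X`: a transition relation and a valuation. -/
structure KripkeStructure (Φ X : Type*) where
  R : X → X → Prop
  v : X → Set Φ

/-- Satisfaction `x ⊨ φ`. -/
def Satisfies {Φ X : Type*} (M : KripkeStructure Φ X) : X → ModalFormula Φ → Prop
  | x, .atom p  => p ∈ M.v x
  | _, .top     => True
  | _, .bot     => False
  | x, .neg φ   => ¬ Satisfies M x φ
  | x, .and φ ψ => Satisfies M x φ ∧ Satisfies M x ψ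
  | x, .or φ ψ  => Satisfies M x φ ∨ Satisfies M x ψ
  | x, .box φ   => ∀ y, M.R x y → Satisfies M y φ

/-- `B` is a bisimulation between `M` and `N`. -/
def IsBisimulation {Φ X Y : Type*} (M : KripkeStructure Φ X) (N : KripkeStructure Φ Y)
    (B : X → Y → Prop) : Prop :=
  ∀ x y, B x y →
    M.v x = N.v y ∧
    (∀ x', M.R x x' → ∃ y', N.R y y' ∧ B x' y') ∧
    (∀ y', N.R y y' → ∃ x', M.R x x' ∧ B x' y')

/-- `x ∼ y` : there is a bisimulation relating `x` and `y`. -/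
def Bisimilar {Φ X Y : Type*} (M : KripkeStructure Φ X) (N : KripkeStructure Φ Y)
    (x : X) (y : Y) : Prop :=
  ∃ B : X → Y → Prop, IsBisimulation M N B ∧ B x y

/-- `x ≈ y` : logical equivalence. -/
def LogEquiv {Φ X Y : Type*} (M : KripkeStructure Φ X) (N : KripkeStructure Φ Y)
    (x : X) (y : Y) : Prop :=
  ∀ φ : ModalFormula Φ, Satisfies M x φ ↔ Satisfies N y φ

/-- A Kripke homomorphism: a map whose graph is a bisimulation. -/
def IsKripkeHom {Φ X Y : Type*} (M : KripkeStructure Φ X) (N : KripkeStructure Φ Y)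
    (f : X → Y) : Prop :=
  IsBisimulation M N (fun x y => y = f x)

/-- `x` is m-saturated: whenever every finite subset of `S` is satisfied at some
successor of `x`, some successor of `x` satisfies all of `S`. -/
def MSaturated {Φ X : Type*} (M : KripkeStructure Φ X) (x : X) : Prop :=
  ∀ S : Set (ModalFormula Φ),
    (∀ S₀ ⊆ S, S₀.Finite → ∃ y, M.R x y ∧ ∀ φ ∈ S₀, Satisfies M y φ) →
    ∃ y, M.R x y ∧ ∀ φ ∈ S, Satisfies M y φ

/-- A Kripke structure is saturated if every state is m-saturated. -/
def Saturated {Φ X : Type*} (M : KripkeStructure Φ X) : Prop :=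
  ∀ x : X, MSaturated M x

lemma bisim_logEquiv {Φ X Y : Type*} {M : KripkeStructure Φ X} {N : KripkeStructure Φ Y}
    {B : X → Y → Prop} (hB : IsBisimulation M N B) :
    ∀ (φ : ModalFormula Φ) (x : X) (y : Y), B x y → (Satisfies M x φ ↔ Satisfies N y φ) := by
  intro φ
  induction φ with
  | atom p => intro x y h; have := (hB x y h).1; simp [Satisfies, this]
  | top => intro x y h; simp [Satisfies]
  | bot => intro x y h; simp [Satisfies]
  | neg φ ih => intro x y h; simp [Satisfies, ih x y h]
  | and φ ψ ih₁ ih₂ => intro x y h; simp [Satisfies, ih₁ x y h, ih₂ x y h]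
  | or φ ψ ih₁ ih₂ => intro x y h; simp [Satisfies, ih₁ x y h, ih₂ x y h]
  | box φ ih =>
    intro x y h
    obtain ⟨_, hfwd, hbwd⟩ := hB x y h
    constructor
    · intro hs y' hy'
      obtain ⟨x', hx', hB'⟩ := hbwd y' hy'
      exact (ih x' y' hB').1 (hs x' hx')
    · intro hs x' hx'
      obtain ⟨y', hy', hB'⟩ := hfwd x' hx'
      exact (ih x' y' hB').2 (hs y' hy')

/-- Homomorphisms preserve and reflect saturation. -/
theorem hom_preserves_reflects_saturation {Φ X₁ X₂ : Type*}
    (M₁ : KripkeStructure Φ X₁) (M₂ : KripkeStructure Φ X₂)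
    (f : X₁ → X₂) (hf : IsKripkeHom M₁ M₂ f) (x : X₁) :
    MSaturated M₁ x ↔ MSaturated M₂ (f x) := by
  have hEq : ∀ (x' : X₁) (φ : ModalFormula Φ),
      Satisfies M₁ x' φ ↔ Satisfies M₂ (f x') φ :=
    fun x' φ => bisim_logEquiv hf φ x' (f x') rfl
  obtain ⟨_, hfwd, hbwd⟩ := hf x (f x) rfl
  constructor
  · intro hsat S hfin
    obtain ⟨x', hx', hS⟩ := hsat S (by
      intro S₀ hS₀ hfin₀
      obtain ⟨y, hy, hyS⟩ := hfin S₀ hS₀ hfin₀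
      obtain ⟨x', hx', hfx'⟩ := hbwd y hy
      exact ⟨x', hx', fun φ hφ => (hEq x' φ).2 (hfx' ▸ hyS φ hφ)⟩)
    obtain ⟨y', hy', hfy'⟩ := hfwd x' hx'
    exact ⟨y', hy', fun φ hφ => hfy' ▸ (hEq x' φ).1 (hS φ hφ)⟩
  · intro hsat S hfin
    obtain ⟨y, hy, hyS⟩ := hsat S (by
      intro S₀ hS₀ hfin₀
      obtain ⟨x', hx', hS₀'⟩ := hfin S₀ hS₀ hfin₀
      obtain ⟨y', hy', hfy'⟩ := hfwd x' hx'
      exact ⟨y', hy', fun φ hφ => hfy' ▸ (hEq x' φ).1 (hS₀' φ hφ)⟩)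
    obtain ⟨x', hx', hfx'⟩ := hbwd y hy
    exact ⟨x', hx', fun φ hφ => (hEq x' φ).2 (hfx' ▸ hyS φ hφ)⟩
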